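/- The function h(a) = (3a - 2π)/(4 sin(a/2)) is monotone increasing on (0, π], and h(π) = π/4; consequently for every a ∈ (4π/5, π), any v satisfying (π - a)/(2 sin(a/2)) < v < (3a - 2π)/(4 sin(a/2)) satisfies 0 < v < 1. -/

import Mathlib

open Real Set

noncomputable def hh : ℝ → ℝ := fun a => (3 * a - 2 * π) / (4 * Real.sin (a / 2))

lemma sin_half_pos {a : ℝ} (h0 : 0 < a) (h1 : a ≤ π) : 0 < Real.sin (a / 2) :=
  Real.sin_pos_of_pos_of_lt_pi (by linarith) (by linarith [Real.pi_pos])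

lemma hh_deriv (a : ℝ) (ha : a ∈ Ioo (0:ℝ) π) :
    HasDerivAt hh ((3 * (4 * Real.sin (a/2)) - (3 * a - 2 * π) * (4 * (Real.cos (a/2) * (1/2)))) / (4 * Real.sin (a/2))^2) a := by
  have hs : Real.sin (a/2) ≠ 0 := ne_of_gt (sin_half_pos ha.1 ha.2.le)
  have hu : HasDerivAt (fun a : ℝ => 3 * a - 2 * π) 3 a := by
    simpa using ((hasDerivAt_id a).const_mul 3).sub_const (2 * π)
  have hv : HasDerivAt (fun a : ℝ => 4 * Real.sin (a / 2)) (4 * (Real.cos (a/2) * (1/2))) a := by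
    have : HasDerivAt (fun a : ℝ => Real.sin (a / 2)) (Real.cos (a/2) * (1/2)) a := by
      have := (Real.hasDerivAt_sin (a/2)).comp a ((hasDerivAt_id a).div_const 2)
      simpa [Function.comp_def] using this
    simpa using this.const_mul 4
  exact hu.div hv (by positivity)

lemma hh_mono : MonotoneOn hh (Ioc 0 π) := by
  have hstrict : StrictMonoOn hh (Ioc 0 π) := by
    apply strictMonoOn_of_deriv_pos (convex_Ioc 0 π)
    · apply ContinuousOn.div
      · fun_prop
      · fun_prop
      · intro x hx
        have := sin_half_pos hx.1 hx.2
        positivity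
    · intro x hx
      rw [interior_Ioc] at hx
      rw [(hh_deriv x hx).deriv]
      have hs : 0 < Real.sin (x/2) := sin_half_pos hx.1 hx.2.le
      obtain ⟨hx1, hx2⟩ := hx
      have hc : 0 < Real.cos (x/2) := Real.cos_pos_of_mem_Ioo ⟨by linarith [Real.pi_pos], by linarith⟩
      have htan : x/2 < Real.tan (x/2) := Real.lt_tan (by linarith) (by linarith)
      rw [Real.tan_eq_sin_div_cos, lt_div_iff₀ hc] at htan
      have hpi := Real.pi_pos
      have key : (3 * x - 2 * π) * (4 * (Real.cos (x/2) * (1/2))) < 3 * (4 * Real.sin (x/2)) := by nlinarith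
      apply div_pos (by linarith) (by positivity)
  exact hstrict.monotoneOn

theorem stmt_9 :
    MonotoneOn (fun a : ℝ => (3 * a - 2 * π) / (4 * Real.sin (a / 2))) (Ioc 0 π) ∧
    (3 * π - 2 * π) / (4 * Real.sin (π / 2)) = π / 4 ∧
    ∀ a ∈ Ioo (4 * π / 5) π, ∀ v : ℝ,
      (π - a) / (2 * Real.sin (a / 2)) < v →
      v < (3 * a - 2 * π) / (4 * Real.sin (a / 2)) →
      0 < v ∧ v < 1 := by
  have hpi := Real.pi_pos
  have hval : (3 * π - 2 * π) / (4 * Real.sin (π / 2)) = π / 4 := by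
    rw [Real.sin_pi_div_two]; ring
  refine ⟨hh_mono, hval, ?_⟩
  intro a ha v hlo hhi
  have hs : 0 < Real.sin (a/2) := sin_half_pos (by linarith [ha.1]) ha.2.le
  constructor
  · have : 0 < (π - a) / (2 * Real.sin (a/2)) := div_pos (by linarith [ha.2]) (by positivity)
    linarith
  · have hm := hh_mono (show a ∈ Ioc 0 π from ⟨by linarith [ha.1], ha.2.le⟩)
      (show π ∈ Ioc 0 π from ⟨hpi, le_refl _⟩) ha.2.le
    have hπ4 : hh π = π / 4 := hval
    have hpilt : π < 4 := by linarith [Real.pi_lt_d2]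
    have : hh a = (3 * a - 2 * π) / (4 * Real.sin (a / 2)) := rfl
    rw [this, hπ4] at hm
    linarith
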